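/- arXiv:2201.03347 — 2 statements merged into one kernel-verified Lean document; each statement's English description precedes it below -/
import Mathlib

section
/- The positive lift map W → B_W is well defined: for any two reduced words s₁⋯s_k and t₁⋯t_k expressing the same element w ∈ W, the products σ_{s₁}⋯σ_{s_k} and σ_{t₁}⋯σ_{t_k} of the positive Artin generators are equal in the Artin–Tits (generalized braid) group B_W. -/
/-- The braid relation of the Artin–Tits group associated with a Coxeter matrix `M`:
the word `σᵢσⱼσᵢ⋯` (`M i j` letters) equals `σⱼσᵢσⱼ⋯` (`M i j` letters), as an element
of the free group. -/
def artinBraidRelation {B : Type*} (M : CoxeterMatrix B) (i j : B) : FreeGroup B :=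
  ((CoxeterSystem.alternatingWord i j (M i j)).map FreeGroup.of).prod *
    (((CoxeterSystem.alternatingWord j i (M i j)).map FreeGroup.of).prod)⁻¹

/-- The Artin–Tits (generalized braid) group of a Coxeter matrix `M`: the group
generated by `σ_s`, `s ∈ S`, subject only to the braid relations (for `M i j ≠ 0`,
i.e. `m_{ij} < ∞`). -/
def ArtinTitsGroup {B : Type*} (M : CoxeterMatrix B) : Type _ :=
  PresentedGroup {r : FreeGroup B | ∃ i j, M i j ≠ 0 ∧ r = artinBraidRelation M i j}

instance {B : Type*} (M : CoxeterMatrix B) : Group (ArtinTitsGroup M) :=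
  inferInstanceAs (Group (PresentedGroup _))

/-- The positive lift of a word in the generators to the Artin–Tits group. -/
def positiveWordLift {B : Type*} (M : CoxeterMatrix B) (l : List B) : ArtinTitsGroup M :=
  (l.map (fun i => (PresentedGroup.of i : ArtinTitsGroup M))).prod

/-!
Matsumoto's argument, for an arbitrary map `f : B → G` to a monoid whose products over the two
alternating words of length `m_ij < ∞` agree; the positive lift is the case `f i = σ_i`.

Induct on the length. Two reduced words of `w` ending in the same letter are handled by cancelling
it. If they end in distinct letters `i ≠ j`, both are right descents of `w`, and the exchange
property gives, for every `k ≤ m_ij`, a reduced word of `w` ending in the alternating word of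
length `k`: the letter deleted by the exchange cannot fall inside the alternating suffix because
`s_i s_j` has order exactly `m_ij`. Hence `m_ij < ∞`, and a single braid move links a reduced word
ending in `i` to one ending in `j`.

The exchange property comes from Tits' action of `W` on `W × ℤ/2`, which shows that the parity of
the number of occurrences of a reflection in the right inversion sequence of a word depends only on
the element it represents. The order of `s_i s_j` is read off the geometric representation, where
`s_i s_j` acts on the plane of `e_i, e_j` by a matrix conjugate to the rotation by `2π / m_ij`
(and by a nontrivial unipotent matrix when `m_ij = ∞`).
-/

open Real

theorem Real.sin_pi_div_ne_zero {m : ℕ} (hm : 2 ≤ m) : sin (π / m) ≠ 0 := by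
  have hm' : (2 : ℝ) ≤ m := by exact_mod_cast hm
  refine (sin_pos_of_pos_of_lt_pi (by positivity) ?_).ne'
  rw [div_lt_iff₀ (by positivity)]
  nlinarith [pi_pos]

/-- The matrix of `s_k s_l` on the basis `e_k, e_l` of their plane when `B(e_k, e_l) = -γ`. -/
def dihedralMatrix (γ : ℝ) : Matrix (Fin 2) (Fin 2) ℝ := !![4 * γ ^ 2 - 1, -2 * γ; 2 * γ, -1]

theorem dihedralMatrix_cos_mul (t : ℝ) :
    dihedralMatrix (cos t) * !![sin t, cos t; 0, 1] =
      !![sin t, cos t; 0, 1] *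
        Algebra.leftMulMatrix Complex.basisOneI (Complex.exp (↑(2 * t) * Complex.I)) := by
  rw [Algebra.leftMulMatrix_complex, Complex.exp_ofReal_mul_I_re, Complex.exp_ofReal_mul_I_im,
    cos_two_mul, sin_two_mul]
  have hsq := sin_sq_add_cos_sq t
  ext i j
  fin_cases i <;> fin_cases j <;> simp [dihedralMatrix] <;>
    first | ring1 | linear_combination (2 * cos t) * hsq

theorem dihedralMatrix_cos_pi_div_pow_eq_one_iff {m : ℕ} (hm : 2 ≤ m) (q : ℕ) :
    dihedralMatrix (cos (π / m)) ^ q = 1 ↔ m ∣ q := by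
  set Q : Matrix (Fin 2) (Fin 2) ℝ := !![sin (π / m), cos (π / m); 0, 1]
  set ζ : ℂ := Complex.exp (↑(2 * (π / m)) * Complex.I)
  have hQ : IsUnit Q := by
    simpa [Q, Matrix.isUnit_iff_isUnit_det, Matrix.det_fin_two_of] using sin_pi_div_ne_zero hm
  have hζ : IsPrimitiveRoot ζ m := by
    convert Complex.isPrimitiveRoot_exp m (by omega) using 2
    push_cast
    ring
  have hconj : Q * Algebra.leftMulMatrix Complex.basisOneI (ζ ^ q) =
      dihedralMatrix (cos (π / m)) ^ q * Q := by
    rw [map_pow]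
    exact (SemiconjBy.pow_right (dihedralMatrix_cos_mul (π / m)).symm q :)
  rw [← hζ.pow_eq_one_iff_dvd, ← (Algebra.leftMulMatrix_injective Complex.basisOneI).eq_iff,
    map_one]
  constructor
  · intro h
    rw [h, one_mul] at hconj
    exact hQ.mul_left_cancel (hconj.trans (mul_one Q).symm)
  · intro h
    rw [h, mul_one] at hconj
    exact hQ.mul_right_cancel (hconj.symm.trans (one_mul Q).symm)

theorem dihedralMatrix_one_pow (q : ℕ) :
    dihedralMatrix 1 ^ q = !![1 + 2 * (q : ℝ), -2 * q; 2 * q, 1 - 2 * q] := by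
  induction q with
  | zero => ext i j; fin_cases i <;> fin_cases j <;> simp
  | succ q ih =>
    rw [pow_succ, ih]
    ext i j
    fin_cases i <;> fin_cases j <;> simp [dihedralMatrix] <;> ring

theorem dihedralMatrix_one_pow_ne_one {q : ℕ} (hq : 0 < q) : dihedralMatrix 1 ^ q ≠ 1 := by
  intro h
  have h00 := congrFun (congrFun h 0) 0
  simp [dihedralMatrix_one_pow] at h00
  omega

noncomputable def planeEmbedding {B : Type*} (k l : B) : (Fin 2 → ℝ) →ₗ[ℝ] (B →₀ ℝ) :=
  Fintype.linearCombination ℝ ![Finsupp.single k 1, Finsupp.single l 1]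

theorem planeEmbedding_injective {B : Type*} {k l : B} (hkl : k ≠ l) :
    Function.Injective (planeEmbedding k l) := by
  intro x y hxy
  have hk := congrArg (· k) hxy
  have hl := congrArg (· l) hxy
  simp [planeEmbedding, Fintype.linearCombination_apply, hkl, hkl.symm] at hk hl
  ext i
  fin_cases i <;> assumption

namespace CoxeterMatrix

variable {B : Type*} (M : CoxeterMatrix B)

/-- `v ↦ B(v, e_k)` for the geometric bilinear form `B(e_l, e_k) = -cos (π / m_lk)`; since
`π / 0 = 0` in Lean, this gives `B(e_l, e_k) = -1` when `m_lk = ∞`. -/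
noncomputable def geometricForm (k : B) : (B →₀ ℝ) →ₗ[ℝ] ℝ :=
  Finsupp.linearCombination ℝ fun l => -cos (π / M l k)

noncomputable def geometricReflection (k : B) : Module.End ℝ (B →₀ ℝ) :=
  LinearMap.id - ((2 : ℝ) • M.geometricForm k).smulRight (Finsupp.single k 1)

theorem geometricForm_single (k l : B) (r : ℝ) :
    M.geometricForm k (Finsupp.single l r) = -r * cos (π / M l k) := by
  simp [geometricForm]

theorem geometricForm_single_self (k : B) (r : ℝ) :
    M.geometricForm k (Finsupp.single k r) = r := by
  simp [geometricForm_single]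

theorem geometricReflection_apply (k : B) (v : B →₀ ℝ) :
    M.geometricReflection k v = v - (2 * M.geometricForm k v) • Finsupp.single k 1 := rfl

theorem geometricReflection_apply_of_geometricForm_eq_zero {k : B} {v : B →₀ ℝ}
    (hv : M.geometricForm k v = 0) : M.geometricReflection k v = v := by
  simp [geometricReflection_apply, hv]

theorem geometricReflection_mul_self (k : B) :
    M.geometricReflection k * M.geometricReflection k = 1 := by
  refine LinearMap.ext fun v => ?_
  simp only [Module.End.mul_apply, geometricReflection_apply, map_sub, map_smul,
    geometricForm_single_self, Module.End.one_apply]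
  module

theorem geometricReflection_mul_comp_planeEmbedding (k l : B) :
    (M.geometricReflection k * M.geometricReflection l) ∘ₗ planeEmbedding k l =
      planeEmbedding k l ∘ₗ Matrix.toLin' (dihedralMatrix (cos (π / M k l))) := by
  refine LinearMap.ext fun x => ?_
  simp only [planeEmbedding, LinearMap.comp_apply, Module.End.mul_apply, Matrix.toLin'_apply,
    Fintype.linearCombination_apply, Fin.sum_univ_two, geometricReflection_apply, map_add,
    map_sub, map_smul, geometricForm_single, M.symmetric l k, M.diagonal, dihedralMatrix,
    Matrix.mulVec, dotProduct, Matrix.of_apply, Matrix.cons_val', Matrix.empty_val',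
    Matrix.cons_val_fin_one, Matrix.cons_val_zero, Matrix.cons_val_one, Nat.cast_one, div_one,
    cos_pi]
  module

theorem geometricReflection_mul_pow_comp_planeEmbedding (k l : B) (n : ℕ) :
    ((M.geometricReflection k * M.geometricReflection l) ^ n) ∘ₗ planeEmbedding k l =
      planeEmbedding k l ∘ₗ Matrix.toLin' (dihedralMatrix (cos (π / M k l)) ^ n) := by
  induction n with
  | zero => simp [Module.End.one_eq_id]
  | succ n ih =>
    rw [pow_succ, Module.End.mul_eq_comp, LinearMap.comp_assoc,
      geometricReflection_mul_comp_planeEmbedding, ← LinearMap.comp_assoc, ih, pow_succ,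
      Matrix.toLin'_mul, LinearMap.comp_assoc]

theorem exists_eq_planeEmbedding_add {k l : B} (hm : 2 ≤ M k l) (v : B →₀ ℝ) :
    ∃ x w, v = planeEmbedding k l x + w ∧ M.geometricForm k w = 0 ∧ M.geometricForm l w = 0 := by
  set γ := cos (π / M k l)
  have hγ : 1 - γ ^ 2 ≠ 0 := by
    rw [← sin_sq]
    exact pow_ne_zero 2 (sin_pi_div_ne_zero hm)
  set a := M.geometricForm k v
  set b := M.geometricForm l v
  set x : Fin 2 → ℝ := ![(a + γ * b) / (1 - γ ^ 2), (b + γ * a) / (1 - γ ^ 2)]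
  refine ⟨x, v - planeEmbedding k l x, by abel, ?_, ?_⟩ <;>
  simp only [planeEmbedding, map_sub, Fintype.linearCombination_apply, Fin.sum_univ_two, map_add,
    map_smul, geometricForm_single, M.symmetric l k, M.diagonal, x, Matrix.cons_val_zero,
    Matrix.cons_val_one, smul_eq_mul, Nat.cast_one, div_one, cos_pi] <;>
  field_simp <;> ring

theorem isLiftable_geometricReflection : M.IsLiftable M.geometricReflection := by
  intro k l
  obtain rfl | hkl := eq_or_ne k l
  · rw [M.diagonal, pow_one, geometricReflection_mul_self]
  obtain h0 | hm := Nat.eq_zero_or_pos (M k l)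
  · rw [h0, pow_zero]
  have hm2 : 2 ≤ M k l := by have := M.off_diagonal k l hkl; omega
  refine LinearMap.ext fun v => ?_
  obtain ⟨x, w, rfl, hwk, hwl⟩ := M.exists_eq_planeEmbedding_add hm2 v
  have hw : (M.geometricReflection k * M.geometricReflection l) w = w := by
    rw [Module.End.mul_apply, M.geometricReflection_apply_of_geometricForm_eq_zero hwl,
      M.geometricReflection_apply_of_geometricForm_eq_zero hwk]
  rw [map_add, ← LinearMap.comp_apply, geometricReflection_mul_pow_comp_planeEmbedding,
    (dihedralMatrix_cos_pi_div_pow_eq_one_iff hm2 _).2 dvd_rfl, Module.End.pow_apply,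
    Function.iterate_fixed hw]
  simp

theorem geometricReflection_mul_pow_ne_one {k l : B} (hkl : k ≠ l) {q : ℕ} (hq : 0 < q)
    (hm : M k l = 0 ∨ q < M k l) :
    (M.geometricReflection k * M.geometricReflection l) ^ q ≠ 1 := by
  intro h
  have hD : dihedralMatrix (cos (π / M k l)) ^ q = 1 := by
    have hcomp := M.geometricReflection_mul_pow_comp_planeEmbedding k l q
    rw [h, Module.End.one_eq_id, LinearMap.id_comp] at hcomp
    refine Matrix.toLin'.injective ?_
    rw [Matrix.toLin'_one]
    exact LinearMap.ext fun x => (planeEmbedding_injective hkl (LinearMap.congr_fun hcomp x)).symm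
  rcases hm with h0 | hlt
  · rw [h0, Nat.cast_zero, div_zero, cos_zero] at hD
    exact dihedralMatrix_one_pow_ne_one hq hD
  · have hm2 : 2 ≤ M k l := by have := M.off_diagonal k l hkl; omega
    exact Nat.not_dvd_of_pos_of_lt hq hlt ((dihedralMatrix_cos_pi_div_pow_eq_one_iff hm2 q).1 hD)

end CoxeterMatrix

namespace CoxeterSystem

theorem prod_map_alternatingWord_two_mul {B G : Type*} [Monoid G] (f : B → G) (i j : B)
    (n : ℕ) : ((alternatingWord i j (2 * n)).map f).prod = (f i * f j) ^ n := by
  induction n with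
  | zero => simp [alternatingWord]
  | succ n ih =>
    rw [Nat.mul_succ, alternatingWord_succ, alternatingWord_succ, pow_succ, ← ih]
    simp

variable {B W : Type*} [Group W] {M : CoxeterMatrix B} (cs : CoxeterSystem M W)

theorem simple_mul_simple_pow_ne_one {i j : B} (hij : i ≠ j) {q : ℕ} (hq : 0 < q)
    (hm : M i j = 0 ∨ q < M i j) : (cs.simple i * cs.simple j) ^ q ≠ 1 := by
  intro h
  apply M.geometricReflection_mul_pow_ne_one hij hq hm
  simpa [cs.lift_apply_simple] using congrArg (cs.lift ⟨_, M.isLiftable_geometricReflection⟩) h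

theorem lift_wordProd {G : Type*} [Monoid G] {f : B → G} (hf : M.IsLiftable f) (ω : List B) :
    cs.lift ⟨f, hf⟩ (cs.wordProd ω) = (ω.map f).prod := by
  rw [wordProd, map_list_prod, List.map_map]
  exact congrArg List.prod (List.map_congr_left fun i _ => cs.lift_apply_simple hf i)

theorem rightInvSeq_alternatingWord (i j : B) (k : ℕ) :
    cs.rightInvSeq (alternatingWord i j k) =
      ((List.range k).map fun r => cs.simple j * (cs.simple i * cs.simple j) ^ r).reverse := by
  induction k generalizing i j with
  | zero => simp [alternatingWord]
  | succ k ih =>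
    have hconj (r : ℕ) :
        MulAut.conj (cs.simple j) (cs.simple i * (cs.simple j * cs.simple i) ^ r) =
          cs.simple j * (cs.simple i * cs.simple j) ^ (r + 1) := by
      rw [MulAut.conj_apply, cs.inv_simple, ← mul_pow_mul, pow_succ]
      simp only [mul_assoc]
    rw [alternatingWord_succ, rightInvSeq_concat, ih, List.range_succ_eq_map]
    simp [hconj, Function.comp_def]

section ParityAction

variable [DecidableEq W]

def parityAction (i : B) : Function.End (W × ZMod 2) :=
  fun p => (cs.simple i * p.1 * cs.simple i, p.2 + if p.1 = cs.simple i then 1 else 0)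

theorem prod_map_parityAction_apply (ω : List B) (t : W) (ε : ZMod 2) :
    (ω.map cs.parityAction).prod (t, ε) =
      (cs.wordProd ω * t * (cs.wordProd ω)⁻¹, ε + ((cs.rightInvSeq ω).count t : ZMod 2)) := by
  induction ω generalizing ε with
  | nil => simp; rfl
  | cons i ω ih =>
    have hiff : (cs.wordProd ω)⁻¹ * cs.simple i * cs.wordProd ω = t ↔
        cs.wordProd ω * t * (cs.wordProd ω)⁻¹ = cs.simple i := by
      constructor <;> intro h <;> rw [← h] <;> group
    show cs.parityAction i ((ω.map cs.parityAction).prod (t, ε)) = _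
    rw [ih]
    simp only [parityAction, wordProd_cons, rightInvSeq, List.count_cons, beq_iff_eq, hiff,
      mul_inv_rev, cs.inv_simple, Prod.mk.injEq]
    constructor
    · group
    · push_cast
      ring

theorem isLiftable_parityAction : M.IsLiftable cs.parityAction := by
  intro i j
  set g : ℕ → W := fun r => cs.simple j * (cs.simple i * cs.simple j) ^ r
  have hperiodic : (List.range (M i j)).map g = ((List.range (M i j)).map (M i j + ·)).map g := by
    simp [g, Function.comp_def, pow_add, cs.simple_mul_simple_pow]
  rw [← prod_map_alternatingWord_two_mul]
  funext ⟨t, ε⟩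
  rw [prod_map_parityAction_apply, wordProd, prod_map_alternatingWord_two_mul,
    cs.simple_mul_simple_pow,
    rightInvSeq_alternatingWord, two_mul, List.range_add, List.map_append, ← hperiodic,
    List.count_reverse, List.count_append, Nat.cast_add, ← two_mul]
  simp only [one_mul, inv_one, mul_one, show (2 : ZMod 2) = 0 from rfl, zero_mul, add_zero]
  rfl

theorem cast_count_rightInvSeq_eq_of_wordProd_eq {ω ω' : List B}
    (h : cs.wordProd ω = cs.wordProd ω') (t : W) :
    ((cs.rightInvSeq ω).count t : ZMod 2) = ((cs.rightInvSeq ω').count t : ZMod 2) := by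
  have hprod : (ω.map cs.parityAction).prod = (ω'.map cs.parityAction).prod := by
    rw [← cs.lift_wordProd cs.isLiftable_parityAction, h, cs.lift_wordProd]
  simpa [prod_map_parityAction_apply] using congrArg (fun f => (f (t, 0)).2) hprod

theorem count_simple_rightInvSeq_append_singleton (ω : List B) (i : B) :
    (cs.rightInvSeq (ω ++ [i])).count (cs.simple i) =
      (cs.rightInvSeq ω).count (cs.simple i) + 1 := by
  have hfix : MulAut.conj (cs.simple i) (cs.simple i) = cs.simple i := by simp
  rw [← List.concat_eq_append, rightInvSeq_concat, List.concat_eq_append, List.count_append]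
  nth_rw 1 [← hfix]
  rw [List.count_map_of_injective _ _ (MulAut.conj (cs.simple i)).injective]
  simp

end ParityAction

theorem simple_mem_rightInvSeq_of_isRightDescent {ω : List B} {i : B}
    (h : cs.IsRightDescent (cs.wordProd ω) i) : cs.simple i ∈ cs.rightInvSeq ω := by
  classical
  by_contra hmem
  obtain ⟨τ, hτ, hτw⟩ := cs.exists_isReduced (cs.wordProd ω * cs.simple i)
  have hτi : cs.wordProd (τ ++ [i]) = cs.wordProd ω := by
    rw [wordProd_append, wordProd_singleton, ← hτw, mul_assoc, simple_mul_simple_self, mul_one]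
  have hparity := cs.cast_count_rightInvSeq_eq_of_wordProd_eq hτi (cs.simple i)
  rw [count_simple_rightInvSeq_append_singleton, List.count_eq_zero.2 hmem] at hparity
  have hτmem : cs.simple i ∈ cs.rightInvSeq τ := by
    rw [← List.count_pos_iff, Nat.pos_iff_ne_zero]
    intro h0
    rw [h0] at hparity
    exact absurd hparity (by decide)
  have hlt := (cs.isRightInversion_of_mem_rightInvSeq hτ hτmem).2
  rw [← hτw, mul_assoc, simple_mul_simple_self, mul_one] at hlt
  exact lt_asymm h hlt

theorem simple_not_mem_rightInvSeq_alternatingWord {i j : B} (hij : i ≠ j) {k : ℕ}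
    (hk : M i j = 0 ∨ k < M i j) : cs.simple j ∉ cs.rightInvSeq (alternatingWord j i k) := by
  rw [rightInvSeq_alternatingWord, List.mem_reverse, List.mem_map]
  rintro ⟨r, hr, hsj⟩
  refine cs.simple_mul_simple_pow_ne_one hij.symm r.succ_pos ?_ ?_
  · rw [M.symmetric]
    exact hk.imp_right (lt_of_le_of_lt (List.mem_range.1 hr))
  · rw [pow_succ', mul_assoc, hsj, simple_mul_simple_self]

theorem exists_isReduced_append_alternatingWord {w : W} {i j : B} (hij : i ≠ j)
    (hi : cs.IsRightDescent w i) (hj : cs.IsRightDescent w j) {k : ℕ}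
    (hk : M i j = 0 ∨ k ≤ M i j) :
    ∃ z, cs.IsReduced (z ++ alternatingWord i j k) ∧
      cs.wordProd (z ++ alternatingWord i j k) = w := by
  induction k generalizing i j with
  | zero =>
    obtain ⟨z, hz, rfl⟩ := cs.exists_isReduced w
    exact ⟨z, by simpa [alternatingWord] using hz, by simp [alternatingWord]⟩
  | succ k ih =>
    obtain ⟨z, hz, hzw⟩ :=
      ih hij.symm hj hi (by rw [M.symmetric]; exact hk.imp_right Nat.le_of_succ_le)
    obtain ⟨p, hp, hpj⟩ :=
      List.getElem_of_mem (cs.simple_mem_rightInvSeq_of_isRightDescent (hzw ▸ hj))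
    have hpz : p < z.length := by
      by_contra! hzp
      refine cs.simple_not_mem_rightInvSeq_alternatingWord hij (hk.imp_right Nat.lt_of_succ_le) ?_
      rw [← List.drop_left (l₁ := z) (l₂ := alternatingWord j i k), rightInvSeq_drop, ← hpj]
      exact List.mem_iff_getElem.2
        ⟨p - z.length, by rw [List.length_drop]; omega, by simp [Nat.add_sub_cancel' hzp]⟩
    have hdel : w * cs.simple j = cs.wordProd (z.eraseIdx p ++ alternatingWord j i k) := by
      rw [← List.eraseIdx_append_of_lt_length hpz, ← cs.wordProd_mul_getD_rightInvSeq,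
        List.getD_eq_getElem _ _ hp, hpj, hzw]
    have hprod : cs.wordProd (z.eraseIdx p ++ alternatingWord i j (k + 1)) = w := by
      rw [alternatingWord_succ, List.concat_eq_append, ← List.append_assoc, wordProd_append,
        ← hdel, wordProd_singleton, mul_assoc, simple_mul_simple_self, mul_one]
    refine ⟨z.eraseIdx p, ?_, hprod⟩
    have hlen := hz.eq
    rw [hzw] at hlen
    rw [IsReduced, hprod, hlen]
    simp [List.length_eraseIdx_of_lt hpz]
    omega

theorem coxeterMatrix_ne_zero_of_isRightDescent {w : W} {i j : B} (hij : i ≠ j)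
    (hi : cs.IsRightDescent w i) (hj : cs.IsRightDescent w j) : M i j ≠ 0 := by
  intro h0
  obtain ⟨z, hz, hzw⟩ :=
    cs.exists_isReduced_append_alternatingWord hij hi hj (k := cs.length w + 1) (Or.inl h0)
  have hlen := hz.eq
  rw [hzw, List.length_append, length_alternatingWord] at hlen
  omega

theorem wordProd_append_alternatingWord_swap (z : List B) (i j : B) :
    cs.wordProd (z ++ alternatingWord j i (M i j)) =
      cs.wordProd (z ++ alternatingWord i j (M i j)) := by
  have hbraid := cs.wordProd_braidWord_eq j i
  rw [braidWord, braidWord, M.symmetric j i] at hbraid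
  rw [wordProd_append, hbraid, ← wordProd_append]

theorem isReduced_append_alternatingWord_swap {z : List B} {i j : B}
    (h : cs.IsReduced (z ++ alternatingWord i j (M i j))) :
    cs.IsReduced (z ++ alternatingWord j i (M i j)) := by
  rw [IsReduced, wordProd_append_alternatingWord_swap, h.eq]
  simp

theorem isRightDescent_wordProd_append_singleton {u : List B} {a : B}
    (h : cs.IsReduced (u ++ [a])) : cs.IsRightDescent (cs.wordProd (u ++ [a])) a := by
  rw [IsRightDescent, h.eq, wordProd_append, wordProd_singleton, mul_assoc,
    simple_mul_simple_self, mul_one, List.length_append, List.length_singleton]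
  exact Nat.lt_succ_of_le (cs.length_wordProd_le u)

theorem prod_map_eq_of_isReduced_of_wordProd_eq {G : Type*} [Monoid G] {f : B → G}
    (hf : ∀ i j, M i j ≠ 0 →
      ((alternatingWord i j (M i j)).map f).prod = ((alternatingWord j i (M i j)).map f).prod)
    {l₁ l₂ : List B} (h₁ : cs.IsReduced l₁) (h₂ : cs.IsReduced l₂)
    (h : cs.wordProd l₁ = cs.wordProd l₂) : (l₁.map f).prod = (l₂.map f).prod := by
  have hlen : l₂.length = l₁.length := by rw [← h₂.eq, ← h, h₁.eq]
  induction hn : l₁.length generalizing l₁ l₂ with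
  | zero => rw [List.length_eq_zero_iff.1 hn, List.length_eq_zero_iff.1 (hlen.trans hn)]
  | succ n ih =>
    have cancel {u v : List B} {a : B} (hu : u.length = n) (hua : cs.IsReduced (u ++ [a]))
        (hva : cs.IsReduced (v ++ [a])) (huv : cs.wordProd (u ++ [a]) = cs.wordProd (v ++ [a])) :
        ((u ++ [a]).map f).prod = ((v ++ [a]).map f).prod := by
      have hu' : cs.IsReduced u := by simpa using hua.take u.length
      have hv' : cs.IsReduced v := by simpa using hva.take v.length
      have huv' : cs.wordProd u = cs.wordProd v := by simpa [wordProd_append] using huv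
      simp only [List.map_append, List.prod_append]
      rw [ih hu' hv' huv' (by rw [← hv'.eq, ← huv', hu'.eq]) hu]
    obtain ⟨u₁, i, rfl⟩ := (List.eq_nil_or_concat' l₁).resolve_left (by rintro rfl; simp at hn)
    obtain ⟨u₂, j, rfl⟩ := (List.eq_nil_or_concat' l₂).resolve_left (by rintro rfl; simp at hlen)
    simp only [List.length_append, List.length_singleton, Nat.add_right_cancel_iff] at hn hlen
    obtain rfl | hij := eq_or_ne i j
    · exact cancel hn h₁ h₂ h
    have hi := cs.isRightDescent_wordProd_append_singleton h₁
    have hj := h ▸ cs.isRightDescent_wordProd_append_singleton h₂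
    obtain ⟨m, hm⟩ :=
      Nat.exists_eq_succ_of_ne_zero (cs.coxeterMatrix_ne_zero_of_isRightDescent hij hi hj)
    obtain ⟨z, hz, hzw⟩ := cs.exists_isReduced_append_alternatingWord hij hi hj (Or.inr le_rfl)
    have hz' := cs.isReduced_append_alternatingWord_swap hz
    have hzw' := (cs.wordProd_append_alternatingWord_swap z i j).trans hzw
    rw [hm, alternatingWord_succ, List.concat_eq_append, ← List.append_assoc] at hz hzw hz' hzw'
    calc ((u₁ ++ [i]).map f).prod = ((z ++ alternatingWord j i (M i j)).map f).prod := by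
          rw [hm, alternatingWord_succ, List.concat_eq_append, ← List.append_assoc]
          exact cancel hn h₁ hz' hzw'.symm
      _ = ((z ++ alternatingWord i j (M i j)).map f).prod := by
          simp only [List.map_append, List.prod_append, hf i j (by omega)]
      _ = ((u₂ ++ [j]).map f).prod := by
          rw [hm, alternatingWord_succ, List.concat_eq_append, ← List.append_assoc]
          exact (cancel (hlen.trans hn) h₂ hz (hzw.trans h).symm).symm

end CoxeterSystem

theorem ArtinTitsGroup.prod_map_of_alternatingWord_eq {B : Type*} (M : CoxeterMatrix B) {i j : B}
    (h : M i j ≠ 0) :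
    ((CoxeterSystem.alternatingWord i j (M i j)).map
        (PresentedGroup.of : B → ArtinTitsGroup M)).prod =
      ((CoxeterSystem.alternatingWord j i (M i j)).map
        (PresentedGroup.of : B → ArtinTitsGroup M)).prod := by
  have hmk (l : List B) : (l.map (PresentedGroup.of : B → ArtinTitsGroup M)).prod =
      PresentedGroup.mk _ (l.map FreeGroup.of).prod := by
    rw [map_list_prod, List.map_map]
    rfl
  rw [hmk, hmk]
  exact PresentedGroup.mk_eq_mk_of_mul_inv_mem ⟨i, j, h, rfl⟩

/-- The positive lift `W → B_W` is well defined: two reduced words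
expressing the same element of the Coxeter group `W` have equal positive lifts in
the Artin–Tits group `B_W`. -/
theorem positiveLift_well_defined {B : Type*} {M : CoxeterMatrix B} {W : Type*} [Group W]
    (cs : CoxeterSystem M W) (l₁ l₂ : List B)
    (h₁ : cs.IsReduced l₁) (h₂ : cs.IsReduced l₂)
    (h : cs.wordProd l₁ = cs.wordProd l₂) :
    positiveWordLift M l₁ = positiveWordLift M l₂ :=
  cs.prod_map_eq_of_isReduced_of_wordProd_eq
    (fun _ _ => ArtinTitsGroup.prod_map_of_alternatingWord_eq M) h₁ h₂ h
end

section
/- If x is a subword of w (obtained by deleting some letters of a reduced word for w), then the element expressed by x is less than or equal to w in the Bruhat order. -/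
/-!
Induct on the reduced word `i :: ω`. A subword omitting the first letter gives an element
`≤ π ω < s i * π ω`; a subword `i :: ω'` has `π ω' ≤ π ω` by induction, and the lifting
property (`u ≤ w` and `w < s i * w` imply `s i * u ≤ s i * w`) finishes. The lifting property is
checked one Bruhat step `v < v * t` at a time: either `s i * v < s i * v * t`, or strong exchange
forces `s i * v = v * t`.

Strong exchange (`ℓ (π ω * t) < ℓ (π ω)` forces `t` to occur in the right inversion sequence
of the word `ω`) comes from the parity representation of `W` on `W × ZMod 2`, in which `s i`
acts by `(x, z) ↦ (s i * x * s i, z + [x = s i])`. It makes the parity of the number of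
occurrences of `t` in that sequence a function of `w = π ω`. This parity flips under
`w ↦ w * t`, and, read off a reduced word, it is `1` only if `ℓ (w * t) < ℓ w`; hence it is
`1` exactly when `ℓ (w * t) < ℓ w`.
-/

/-- The Bruhat order on a Coxeter group: the reflexive-transitive closure of the
relation `u < u * t` for `t` a reflection with `ℓ(u) < ℓ(u * t)`. -/
def bruhatLE {B : Type*} {M : CoxeterMatrix B} {W : Type*} [Group W]
    (cs : CoxeterSystem M W) : W → W → Prop :=
  Relation.ReflTransGen (fun u v => ∃ t, cs.IsReflection t ∧ v = u * t ∧
    cs.length u < cs.length v)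

theorem mul_mul_inv_eq_iff_eq_inv_mul_mul {G : Type*} [Group G] (g x y : G) :
    g * x * g⁻¹ = y ↔ x = g⁻¹ * y * g := by
  constructor <;> rintro rfl <;> group

namespace CoxeterSystem

variable {B : Type*} {M : CoxeterMatrix B} {W : Type*} [Group W] (cs : CoxeterSystem M W)

local prefix:100 "s " => cs.simple
local prefix:100 "π " => cs.wordProd
local prefix:100 "ℓ " => cs.length
local prefix:100 "ris " => cs.rightInvSeq

section ParityRepresentation

variable [DecidableEq W]

def reflectionToggle (i : B) : Equiv.Perm (W × ZMod 2) :=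
  Function.Involutive.toPerm (fun p => (s i * p.1 * s i, p.2 + if p.1 = s i then 1 else 0)) <| by
    rintro ⟨x, z⟩
    have hfix : s i * (x * s i) = s i ↔ x = s i := by
      simpa [cs.inv_simple, mul_assoc] using mul_mul_inv_eq_iff_eq_inv_mul_mul (s i) x (s i)
    simp only [hfix, add_assoc, CharTwo.add_self_eq_zero, add_zero, mul_assoc,
      simple_mul_simple_cancel_left, simple_mul_simple_self, mul_one]

theorem reflectionToggle_apply (i : B) (x : W) (z : ZMod 2) :
    cs.reflectionToggle i (x, z) = (s i * x * s i, z + if x = s i then 1 else 0) :=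
  rfl

theorem reflectionToggle_mul_pow_apply (i i' : B) (m : ℕ) (x : W) (z : ZMod 2) :
    ((cs.reflectionToggle i * cs.reflectionToggle i') ^ m) (x, z) =
      ((s i * s i') ^ m * x * ((s i * s i') ^ m)⁻¹,
        z + ∑ j ∈ Finset.range (2 * m), if x = (s i' * s i) ^ j * s i' then 1 else 0) := by
  set a := s i * s i'
  set b := s i' * s i
  have hab : a⁻¹ = b := by simp [a, b, cs.inv_simple]
  have hstep (x : W) (z : ZMod 2) : (cs.reflectionToggle i * cs.reflectionToggle i') (x, z) =
      (a * x * a⁻¹, z + ((if x = s i' then 1 else 0) + if x = b ^ 1 * s i' then 1 else 0)) := by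
    have hfix : s i' * x * s i' = s i ↔ x = b ^ 1 * s i' := by
      simpa [cs.inv_simple, b, mul_assoc] using mul_mul_inv_eq_iff_eq_inv_mul_mul (s i') x (s i)
    simp only [Equiv.Perm.mul_apply, reflectionToggle_apply, hfix, hab, add_assoc, a, b,
      ← mul_assoc]
  have hconj (x : W) (j : ℕ) : a * x * a⁻¹ = b ^ j * s i' ↔ x = b ^ (j + 2) * s i' := by
    have hsa : s i' * a = b * s i' := by simp only [a, b, mul_assoc]
    rw [mul_mul_inv_eq_iff_eq_inv_mul_mul, hab, pow_succ, pow_succ', mul_assoc, mul_assoc,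
      mul_assoc, hsa]
    simp only [b, mul_assoc]
  induction m generalizing x z with
  | zero => simp
  | succ m ih =>
    rw [pow_succ, Equiv.Perm.mul_apply, hstep, ih]
    refine Prod.ext ?_ ?_
    · simp only [pow_succ, mul_inv_rev, mul_assoc]
    · simp only [hconj]
      rw [Nat.mul_succ, Finset.sum_range_succ', Finset.sum_range_succ', pow_zero, one_mul]
      ring

-- The sum runs over two periods of `j ↦ (s i' * s i) ^ j`.
theorem isLiftable_reflectionToggle : M.IsLiftable cs.reflectionToggle := by
  intro i i'
  ext ⟨x, z⟩ : 1
  rw [reflectionToggle_mul_pow_apply, cs.simple_mul_simple_pow, two_mul, Finset.sum_range_add]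
  simp [pow_add, CharTwo.add_self_eq_zero]

noncomputable def parityRep : W →* Equiv.Perm (W × ZMod 2) :=
  cs.lift ⟨cs.reflectionToggle, cs.isLiftable_reflectionToggle⟩

theorem parityRep_wordProd_apply (ω : List B) (x : W) (z : ZMod 2) :
    cs.parityRep (π ω) (x, z) = (π ω * x * (π ω)⁻¹, z + (ris ω).count x) := by
  induction ω generalizing z with
  | nil => simp [parityRep]
  | cons i ω ih =>
    have hhead : (π ω * x * (π ω)⁻¹ = s i) ↔ ((π ω)⁻¹ * s i * π ω = x) := by
      rw [mul_mul_inv_eq_iff_eq_inv_mul_mul, eq_comm]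
    rw [wordProd_cons, map_mul, Equiv.Perm.mul_apply, ih, parityRep, lift_apply_simple,
      reflectionToggle_apply, rightInvSeq, List.count_cons]
    simp only [beq_iff_eq, ← hhead]
    refine Prod.ext ?_ ?_
    · simp only [mul_inv_rev, cs.inv_simple, mul_assoc]
    · split_ifs <;> simp [add_assoc]

noncomputable def inversionParity (w x : W) : ZMod 2 := (cs.parityRep w (x, 0)).2

theorem inversionParity_wordProd (ω : List B) (x : W) :
    cs.inversionParity (π ω) x = (ris ω).count x := by
  simp [inversionParity, parityRep_wordProd_apply]

theorem parityRep_apply (w x : W) (z : ZMod 2) :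
    cs.parityRep w (x, z) = (w * x * w⁻¹, z + cs.inversionParity w x) := by
  obtain ⟨ω, rfl⟩ := cs.wordProd_surjective w
  rw [parityRep_wordProd_apply, inversionParity_wordProd]

theorem inversionParity_mul (u v x : W) :
    cs.inversionParity (u * v) x =
      cs.inversionParity v x + cs.inversionParity u (v * x * v⁻¹) := by
  have h := cs.parityRep_apply (u * v) x 0
  rw [map_mul, Equiv.Perm.mul_apply, parityRep_apply, parityRep_apply] at h
  simpa using (congrArg Prod.snd h).symm

theorem inversionParity_one (x : W) : cs.inversionParity 1 x = 0 := by
  simp [inversionParity]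

theorem inversionParity_simple_self (i : B) : cs.inversionParity (s i) (s i) = 1 := by
  simpa using cs.inversionParity_wordProd [i] (s i)

theorem inversionParity_self {t : W} (ht : cs.IsReflection t) : cs.inversionParity t t = 1 := by
  obtain ⟨v, i, rfl⟩ := ht
  have hv : v⁻¹ * (v * s i * v⁻¹) * v⁻¹⁻¹ = s i := by group
  have hs : s i * s i * (s i)⁻¹ = s i := by group
  have hcancel := cs.inversionParity_mul v v⁻¹ (v * s i * v⁻¹)
  rw [mul_inv_cancel, inversionParity_one, hv] at hcancel
  rw [inversionParity_mul, hv, inversionParity_mul, hs, inversionParity_simple_self]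
  linear_combination -hcancel

theorem inversionParity_mul_self {t : W} (ht : cs.IsReflection t) (w : W) :
    cs.inversionParity (w * t) t = cs.inversionParity w t + 1 := by
  rw [inversionParity_mul, cs.inversionParity_self ht, ht.inv, ht.mul_self, one_mul, add_comm]

theorem mem_rightInvSeq_of_inversionParity_eq_one {ω : List B} {t : W}
    (h : cs.inversionParity (π ω) t = 1) : t ∈ ris ω := by
  rw [inversionParity_wordProd] at h
  exact List.count_pos_iff.mp (Nat.pos_of_ne_zero (by rintro h0; simp [h0] at h))

theorem length_mul_lt_of_inversionParity_eq_one {w t : W}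
    (h : cs.inversionParity w t = 1) : ℓ (w * t) < ℓ w := by
  obtain ⟨ω, hω, rfl⟩ := cs.exists_isReduced w
  exact (cs.isRightInversion_of_mem_rightInvSeq hω
    (cs.mem_rightInvSeq_of_inversionParity_eq_one h)).2

theorem inversionParity_eq_one_iff {w t : W} (ht : cs.IsReflection t) :
    cs.inversionParity w t = 1 ↔ ℓ (w * t) < ℓ w := by
  refine ⟨cs.length_mul_lt_of_inversionParity_eq_one, fun hlt => ?_⟩
  rcases (by decide : ∀ e : ZMod 2, e = 0 ∨ e = 1) (cs.inversionParity w t) with h0 | h1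
  · have := cs.length_mul_lt_of_inversionParity_eq_one (w := w * t)
      (by rw [inversionParity_mul_self cs ht, h0, zero_add])
    rw [mul_assoc, ht.mul_self, mul_one] at this
    omega
  · exact h1

end ParityRepresentation

theorem mem_rightInvSeq_of_length_mul_lt {ω : List B} {t : W}
    (ht : cs.IsReflection t) (hlt : ℓ (π ω * t) < ℓ (π ω)) : t ∈ ris ω := by
  classical
  exact cs.mem_rightInvSeq_of_inversionParity_eq_one ((cs.inversionParity_eq_one_iff ht).mpr hlt)

theorem exists_wordProd_eraseIdx_of_length_mul_lt {ω : List B} {t : W}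
    (ht : cs.IsReflection t) (hlt : ℓ (π ω * t) < ℓ (π ω)) :
    ∃ k, π ω * t = π (ω.eraseIdx k) := by
  obtain ⟨k, hk, rfl⟩ := List.mem_iff_getElem.mp (cs.mem_rightInvSeq_of_length_mul_lt ht hlt)
  exact ⟨k, by rw [← wordProd_mul_getD_rightInvSeq, List.getD_eq_getElem]⟩

theorem length_lt_simple_mul_of_isReduced_cons {i : B} {ω : List B} (h : cs.IsReduced (i :: ω)) :
    ℓ (π ω) < ℓ (s i * π ω) := by
  have := cs.length_wordProd_le ω
  rw [← wordProd_cons, h.eq, List.length_cons]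
  omega

theorem bruhatLE_mul_of_length_lt {u t : W} (ht : cs.IsReflection t) (h : ℓ u < ℓ (u * t)) :
    bruhatLE cs u (u * t) :=
  .single ⟨t, ht, rfl, h⟩

theorem bruhatLE_simple_mul_of_length_lt {u : W} {i : B} (h : ℓ u < ℓ (s i * u)) :
    bruhatLE cs u (s i * u) := by
  have hconj : s i * u = u * (u⁻¹ * s i * u) := by group
  rw [hconj] at h ⊢
  exact cs.bruhatLE_mul_of_length_lt (by simpa using (cs.isReflection_simple i).conj u⁻¹) h

-- By strong exchange `u` is the word `i :: c` for `u * t` with one letter deleted; deleting a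
-- letter of `c` instead would give `ℓ (s i * u) ≤ ℓ (s i * u * t)`.
theorem simple_mul_eq_mul_of_length_lt {u t : W} {i : B} (ht : cs.IsReflection t)
    (hut : ℓ u < ℓ (u * t)) (hsut : ℓ (s i * u * t) < ℓ (s i * u)) : s i * u = u * t := by
  obtain ⟨c, hc, hsw⟩ := cs.exists_isReduced (s i * u * t)
  have hw : π (i :: c) = u * t := by
    rw [wordProd_cons, ← hsw, mul_assoc, simple_mul_simple_cancel_left]
  have hdel : ℓ (π (i :: c) * t) < ℓ (π (i :: c)) := by
    rwa [hw, mul_assoc, ht.mul_self, mul_one]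
  obtain ⟨_ | k, hk⟩ := cs.exists_wordProd_eraseIdx_of_length_mul_lt ht hdel
  · rw [hw, mul_assoc, ht.mul_self, mul_one, List.eraseIdx_zero, List.tail_cons, ← hsw] at hk
    nth_rw 1 [hk]
    rw [mul_assoc, simple_mul_simple_cancel_left]
  · rw [hw, mul_assoc, ht.mul_self, mul_one, List.eraseIdx_cons_succ, wordProd_cons] at hk
    have hle : ℓ (s i * u) ≤ c.length := by
      rw [hk, simple_mul_simple_cancel_left]
      exact (cs.length_wordProd_le _).trans (List.length_eraseIdx_le _ _)
    have := hc.eq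
    rw [← hsw] at this
    omega

theorem bruhatLE_or_of_bruhatLE {u w : W} (h : bruhatLE cs u w) (i : B) :
    bruhatLE cs (s i * u) w ∨ bruhatLE cs (s i * u) (s i * w) := by
  induction h with
  | refl => exact .inr .refl
  | @tail v _ _ hvw ih =>
    obtain ⟨t, ht, rfl, hlt⟩ := hvw
    rcases ih with hu | hu
    · exact .inl (hu.trans (cs.bruhatLE_mul_of_length_lt ht hlt))
    · rcases lt_or_gt_of_ne (ht.length_mul_left_ne (s i * v)) with hsvt | hsvt
      · exact .inl (cs.simple_mul_eq_mul_of_length_lt ht hlt hsvt ▸ hu)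
      · rw [← mul_assoc]
        exact .inr (hu.trans (cs.bruhatLE_mul_of_length_lt ht hsvt))

theorem bruhatLE_simple_mul_simple_mul {u w : W} (h : bruhatLE cs u w) {i : B}
    (hw : ℓ w < ℓ (s i * w)) :
    bruhatLE cs (s i * u) (s i * w) :=
  (cs.bruhatLE_or_of_bruhatLE h i).elim (·.trans (cs.bruhatLE_simple_mul_of_length_lt hw)) id

end CoxeterSystem

/-- If `x` is a subword of a reduced word for `w`, then the element
expressed by `x` is `≤ w` in the Bruhat order. -/
theorem subword_le_bruhat {B : Type*} {M : CoxeterMatrix B} {W : Type*} [Group W]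
    (cs : CoxeterSystem M W)
    (l : List B) (hl : cs.IsReduced l)
    (l' : List B) (hsub : l'.Sublist l) :
    bruhatLE cs (cs.wordProd l') (cs.wordProd l) := by
  induction hsub with
  | slnil => exact .refl
  | cons i _ ih =>
    rw [cs.wordProd_cons]
    exact (ih (hl.drop 1)).trans
      (cs.bruhatLE_simple_mul_of_length_lt (cs.length_lt_simple_mul_of_isReduced_cons hl))
  | cons_cons i _ ih =>
    rw [cs.wordProd_cons, cs.wordProd_cons]
    exact cs.bruhatLE_simple_mul_simple_mul (ih (hl.drop 1))
      (cs.length_lt_simple_mul_of_isReduced_cons hl)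
end
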